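/- Let 1 ≤ p ≤ k ≤ N and set 𝔑_k(p) := s_{i_{p+1}} s_{i_{p+2}} ⋯ s_{i_k} Λ_{i_k} ∈ ℤ^{n+1} (so 𝔑_k(k) = Λ_{i_k}). Extend the residue function by res(i,j) := t−i+j for all i, j ≥ 0, and read all Λ-indices with the convention that indices 0 and n+1 give the class 0. Then in the quotient group ℤ^{n+1}/ℤ·(1,1,…,1): if j^p < j^k, 𝔑_k(p) ≡ Λ_{res(i^k,0)} − Λ_{res(i^p,0)} + Λ_{res(i^p,j^p)} − Λ_{res(i^p−1,j^p)} + Λ_{res(i^p−1,j^k)}, and if j^p ≥ j^k, 𝔑_k(p) ≡ Λ_{res(i^k,0)} − Λ_{res(i^p,0)} + Λ_{res(i^p,j^k)}. -/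

import Mathlib

/-!
`𝔑_k(p)` is itself a 0/1 vector: the indicator of
`[1, t-i^k] ∪ (t-i^p, t-i^p+min(j^p,j^k)] ∪ (t-i^p+j^p+1, t-i^p+1+j^k]`,
so both congruences hold with `c = 0`. This follows by downward induction on `p`, since
`𝔑_k(p) = s_{i_{p+1}} 𝔑_k(p+1)`: when `p+1` lies in the row of `p`, the reflection either fixes
the vector or moves the last point of the middle interval to the front of the third; when `p+1`
starts a new row, the middle interval is the single point `t-i^p` and the reflection moves it to
`t-i^p+1`, where it merges with the third interval into the middle interval of the previous row.
-/

namespace Stmt5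

/-- Row index (1-indexed) of the box labeled `p` in the `t × U` rectangle
(boxes are labeled `1, …, t·U` row by row). -/
def ibox (U p : ℕ) : ℕ := (p - 1) / U + 1

/-- Column index (1-indexed) of the box labeled `p`. -/
def jbox (U p : ℕ) : ℕ := (p - 1) % U + 1

/-- The residue `res(i,j) = t - i + j` (as a natural number, valid when `i ≤ t + j`). -/
def res (t i j : ℕ) : ℕ := t + j - i

/-- The word `i_p = res(i^p, j^p)`. -/
def iword (t U p : ℕ) : ℕ := res t (ibox U p) (jbox U p)

/-- `Λ_m = e_1 + ⋯ + e_m` of `ℤ^{n+1}`, as a vector with 1-indexed coordinates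
(`Λ_0 = 0`, and indices `≥ n+1` cap at the all-ones vector). -/
def Lam (m : ℕ) : ℕ → ℤ := fun x => if 1 ≤ x ∧ x ≤ m then 1 else 0

/-- The simple reflection `s_r` of `S_{n+1}` acting on vectors by exchanging the
`r`-th and `(r+1)`-st coordinates. -/
def sAct (r : ℕ) (v : ℕ → ℤ) : ℕ → ℤ := fun x =>
  if x = r then v (r + 1) else if x = r + 1 then v r else v x

/-- Apply a sequence of simple reflections, leftmost outermost. -/
def applySeq : List ℕ → (ℕ → ℤ) → ℕ → ℤ
  | [], v => v
  | r :: rs, v => sAct r (applySeq rs v)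

/-- `𝔑_k(p) = s_{i_{p+1}} s_{i_{p+2}} ⋯ s_{i_k} Λ_{i_k}`. -/
def Nfrak (t U p k : ℕ) : ℕ → ℤ :=
  applySeq ((List.range (k - p)).map fun a => iword t U (p + 1 + a)) (Lam (iword t U k))

/-- The all-ones vector `(1, …, 1) ∈ ℤ^{n+1}`. -/
def allOnes (n : ℕ) : ℕ → ℤ := fun x => if 1 ≤ x ∧ x ≤ n + 1 then 1 else 0

def nfrakForm (t ip jp ik jk : ℕ) : ℕ → ℤ := fun x =>
  if (1 ≤ x ∧ x ≤ t - ik) ∨ (t - ip < x ∧ x ≤ t - ip + min jp jk) ∨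
      (t - ip + jp + 1 < x ∧ x ≤ t - ip + 1 + jk) then 1 else 0

section Boxes

variable {U : ℕ}

lemma one_le_ibox (p : ℕ) : 1 ≤ ibox U p := Nat.le_add_left 1 _

lemma jbox_le (hU : 0 < U) (p : ℕ) : jbox U p ≤ U := Nat.mod_lt _ hU

lemma ibox_mono {p k : ℕ} (h : p ≤ k) : ibox U p ≤ ibox U k :=
  Nat.succ_le_succ (Nat.div_le_div_right (Nat.sub_le_sub_right h 1))

lemma ibox_le {t p : ℕ} (hU : 0 < U) (hp : 1 ≤ p) (h : p ≤ t * U) : ibox U p ≤ t :=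
  (Nat.div_lt_iff_lt_mul hU).2 (by omega)

lemma ibox_succ_of_jbox_lt {p : ℕ} (hp : 1 ≤ p) (h : jbox U p < U) :
    ibox U (p + 1) = ibox U p ∧ jbox U (p + 1) = jbox U p + 1 := by
  have hdm := Nat.div_add_mod (p - 1) U
  have hsucc : p + 1 - 1 = (p - 1) % U + 1 + U * ((p - 1) / U) := by omega
  unfold ibox jbox at *
  rw [hsucc, Nat.add_mul_mod_self_left, Nat.mod_eq_of_lt h,
    Nat.add_mul_div_left _ _ (by omega), Nat.div_eq_of_lt h]
  omega

lemma ibox_succ_of_jbox_eq {p : ℕ} (hp : 1 ≤ p) (hU : 0 < U) (h : jbox U p = U) :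
    ibox U (p + 1) = ibox U p + 1 ∧ jbox U (p + 1) = 1 := by
  have hdm := Nat.div_add_mod (p - 1) U
  have hsucc : p + 1 - 1 = U * ((p - 1) / U + 1) := by
    unfold jbox at h
    rw [Nat.mul_add_one]; omega
  unfold ibox jbox
  rw [hsucc, Nat.mul_mod_right, Nat.mul_div_cancel_left _ hU]
  exact ⟨rfl, rfl⟩

end Boxes

lemma Nfrak_self (t U p : ℕ) : Nfrak t U p p = Lam (iword t U p) := by
  simp [Nfrak, applySeq]

lemma Nfrak_of_lt (t U : ℕ) {p k : ℕ} (h : p < k) :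
    Nfrak t U p k = sAct (iword t U (p + 1)) (Nfrak t U (p + 1) k) := by
  obtain ⟨d, rfl⟩ := Nat.exists_eq_add_of_lt h
  simp only [Nfrak, show p + d + 1 - p = d + 1 by omega, show p + d + 1 - (p + 1) = d by omega,
    List.range_succ_eq_map, List.map_cons, List.map_map, applySeq]
  congr 3
  funext a
  simp only [Function.comp_apply]
  congr 1
  omega

section Reflections

variable {t ip ik jk : ℕ}

lemma sAct_nfrakForm_of_jbox_lt {jp : ℕ} (hik : ip ≤ ik) :
    sAct (t - ip + jp + 1) (nfrakForm t ip (jp + 1) ik jk) = nfrakForm t ip jp ik jk := by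
  funext x
  simp only [sAct, nfrakForm]
  split_ifs <;> omega

lemma sAct_nfrakForm_of_jbox_eq {U : ℕ} (hik : ip + 1 ≤ ik) (hikt : ik ≤ t) (hjkU : jk ≤ U) :
    sAct (t - ip) (nfrakForm t (ip + 1) 1 ik jk) = nfrakForm t ip U ik jk := by
  funext x
  simp only [sAct, nfrakForm]
  split_ifs <;> omega

end Reflections

section ClosedForm

variable {t ip jp ik jk : ℕ}

lemma nfrakForm_eq_of_lt (hip : 1 ≤ ip) (hik : ip ≤ ik) (hikt : ik ≤ t) (hlt : jp < jk) :
    nfrakForm t ip jp ik jk = Lam (res t ik 0) - Lam (res t ip 0) + Lam (res t ip jp)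
      - Lam (res t (ip - 1) jp) + Lam (res t (ip - 1) jk) := by
  funext x
  simp only [nfrakForm, Lam, res, Pi.add_apply, Pi.sub_apply]
  split_ifs <;> omega

lemma nfrakForm_eq_of_le (hik : ip ≤ ik) (hikt : ik ≤ t) (hle : jk ≤ jp) :
    nfrakForm t ip jp ik jk = Lam (res t ik 0) - Lam (res t ip 0) + Lam (res t ip jk) := by
  funext x
  simp only [nfrakForm, Lam, res, Pi.add_apply, Pi.sub_apply]
  split_ifs <;> omega

end ClosedForm

theorem Nfrak_eq_nfrakForm {t U p k : ℕ} (hU : 0 < U) (hp : 1 ≤ p) (hpk : p ≤ k)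
    (hk : k ≤ t * U) :
    Nfrak t U p k = nfrakForm t (ibox U p) (jbox U p) (ibox U k) (jbox U k) := by
  have hikt := ibox_le hU (by omega) hk
  induction hd : k - p generalizing p with
  | zero =>
    obtain rfl : p = k := by omega
    rw [Nfrak_self]
    funext x
    simp only [Lam, nfrakForm, iword, res]
    split_ifs <;> omega
  | succ d ih =>
    rw [Nfrak_of_lt t U (by omega), ih (by omega) (by omega) (by omega)]
    rcases (jbox_le hU p).lt_or_eq with hlt | heq
    · obtain ⟨hi, hj⟩ := ibox_succ_of_jbox_lt hp hlt
      have hmono : ibox U p ≤ ibox U k := ibox_mono hpk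
      rw [hi, hj, show iword t U (p + 1) = t - ibox U p + jbox U p + 1 by
        unfold iword res; rw [hi, hj]; omega]
      exact sAct_nfrakForm_of_jbox_lt hmono
    · obtain ⟨hi, hj⟩ := ibox_succ_of_jbox_eq hp hU heq
      have hmono : ibox U (p + 1) ≤ ibox U k := ibox_mono (by omega)
      rw [hi] at hmono
      rw [hi, hj, heq, show iword t U (p + 1) = t - ibox U p by
        unfold iword res; rw [hi, hj]; omega]
      exact sAct_nfrakForm_of_jbox_eq hmono hikt (jbox_le hU _)

theorem stmt5 (n t : ℕ) (p k : ℕ)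
    (hp : 1 ≤ p) (hpk : p ≤ k) (hk : k ≤ t * (n - t + 1)) :
    (jbox (n - t + 1) p < jbox (n - t + 1) k →
      ∃ c : ℤ, Nfrak t (n - t + 1) p k =
        Lam (res t (ibox (n - t + 1) k) 0) - Lam (res t (ibox (n - t + 1) p) 0)
          + Lam (res t (ibox (n - t + 1) p) (jbox (n - t + 1) p))
          - Lam (res t (ibox (n - t + 1) p - 1) (jbox (n - t + 1) p))
          + Lam (res t (ibox (n - t + 1) p - 1) (jbox (n - t + 1) k))
          + c • allOnes n) ∧
    (jbox (n - t + 1) k ≤ jbox (n - t + 1) p →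
      ∃ c : ℤ, Nfrak t (n - t + 1) p k =
        Lam (res t (ibox (n - t + 1) k) 0) - Lam (res t (ibox (n - t + 1) p) 0)
          + Lam (res t (ibox (n - t + 1) p) (jbox (n - t + 1) k))
          + c • allOnes n) := by
  set U := n - t + 1
  have hU : 0 < U := Nat.succ_pos _
  have hmono : ibox U p ≤ ibox U k := ibox_mono hpk
  have hikt : ibox U k ≤ t := ibox_le hU (by omega) hk
  rw [Nfrak_eq_nfrakForm hU hp hpk hk]
  refine ⟨fun hlt => ⟨0, ?_⟩, fun hle => ⟨0, ?_⟩⟩ <;> rw [zero_smul, add_zero]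
  exacts [nfrakForm_eq_of_lt (one_le_ibox p) hmono hikt hlt,
    nfrakForm_eq_of_le hmono hikt hle]

end Stmt5
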